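/- Horizontal composition of typewriters is well defined: given typewriters M = (M₀, M₁; D_f, D_h; D_CR) and M' = (M₁, M₂; D'_f, D'_h; D'_CR) over chain complexes, with component decompositions D_CR(x,y) = (D_g(y)+D_{fg}(x), D_{gh}(y)+D_{fgh}(x)) and similarly for D'_CR, the tuple M ⋆ M' := (M₀, M₂; D'_f∘D_f, D'_h∘D_h; (D⋆D')_CR) with (D⋆D')_CR having components D*_g := D_g∘D'_g, D*_{fg} := D_g∘D'_{fg}∘D_f, D*_{gh} := D'_h∘D_{gh}∘D'_g, D*_{fgh} := D'_h∘D_{gh}∘D'_{fg}∘D_f, is again a typewriter; i.e., D'_f∘D_f and D'_h∘D_h are chain maps M₀ → M₂ and (D⋆D')_CR : Cone(D'_f∘D_f) → Cone(D'_h∘D_h) is a chain map. -/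

import Mathlib

open LinearMap

abbrev F2 := ZMod 2

section Defs

variable {P Q P' Q' : Type} [AddCommGroup P] [Module F2 P] [AddCommGroup Q] [Module F2 Q]
  [AddCommGroup P'] [Module F2 P'] [AddCommGroup Q'] [Module F2 Q']

/-- (x,y) ↦ (a x, b y + c x): cone differentials and cone maps. -/
def bold (a : P →ₗ[F2] P') (b : Q →ₗ[F2] Q') (c : P →ₗ[F2] Q') :
    P × Q →ₗ[F2] P' × Q' :=
  LinearMap.prod (a ∘ₗ LinearMap.fst F2 P Q)
    (b ∘ₗ LinearMap.snd F2 P Q + c ∘ₗ LinearMap.fst F2 P Q)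

/-- The cone map with components (D_g, D_{fg}, D_{gh}, D_{fgh}):
(x,y) ↦ (D_g y + D_{fg} x, D_{gh} y + D_{fgh} x). -/
def crMap (Dg : Q →ₗ[F2] P') (Dfg : P →ₗ[F2] P') (Dgh : Q →ₗ[F2] Q')
    (Dfgh : P →ₗ[F2] Q') : P × Q →ₗ[F2] P' × Q' :=
  LinearMap.prod (Dg ∘ₗ LinearMap.snd F2 P Q + Dfg ∘ₗ LinearMap.fst F2 P Q)
    (Dgh ∘ₗ LinearMap.snd F2 P Q + Dfgh ∘ₗ LinearMap.fst F2 P Q)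

end Defs

/-
Over `F2`, `∂A + A∂ = 0` says that `A` commutes with the differentials, and a cone map is a chain
map iff its components satisfy `∂D_g = D_g∂`, `∂D_fg = D_g D_f + D_fg∂`,
`∂D_gh = D_gh∂ + D_h D_g` and `∂D_fgh = D_gh D_f + D_fgh∂ + D_h D_fg`. Every component of the
star composite is a composite of components of `M` and `M'`; pushing `∂` through it from left
to right, one factor at a time, produces exactly the correction terms these equations demand of
the composite.
-/

theorem F2.add_eq_zero_iff_eq {M : Type} [AddCommGroup M] [Module F2 M] {a b : M} :
    a + b = 0 ↔ a = b := by
  have neg_b : -b = b := by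
    rw [← neg_one_smul F2 b, show (-1 : F2) = 1 from rfl, one_smul]
  rw [add_eq_zero_iff_eq_neg, neg_b]

section Cone

variable {P Q P' Q' : Type} [AddCommGroup P] [Module F2 P] [AddCommGroup Q] [Module F2 Q]
  [AddCommGroup P'] [Module F2 P'] [AddCommGroup Q'] [Module F2 Q']

theorem comp_add_comp_eq_zero_iff {d : P →ₗ[F2] P} {d' : P' →ₗ[F2] P'} {f : P →ₗ[F2] P'} :
    d' ∘ₗ f + f ∘ₗ d = 0 ↔ ∀ x, d' (f x) = f (d x) := by
  rw [F2.add_eq_zero_iff_eq, LinearMap.ext_iff]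
  rfl

theorem crMap_comp_bold (Dg : Q →ₗ[F2] P') (Dfg : P →ₗ[F2] P') (Dgh : Q →ₗ[F2] Q')
    (Dfgh : P →ₗ[F2] Q') (a : P →ₗ[F2] P) (b : Q →ₗ[F2] Q) (c : P →ₗ[F2] Q) :
    crMap Dg Dfg Dgh Dfgh ∘ₗ bold a b c
      = crMap (Dg ∘ₗ b) (Dg ∘ₗ c + Dfg ∘ₗ a) (Dgh ∘ₗ b) (Dgh ∘ₗ c + Dfgh ∘ₗ a) := by
  ext <;> simp [crMap, bold]

theorem bold_comp_crMap (Dg : Q →ₗ[F2] P') (Dfg : P →ₗ[F2] P') (Dgh : Q →ₗ[F2] Q')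
    (Dfgh : P →ₗ[F2] Q') (a : P' →ₗ[F2] P') (b : Q' →ₗ[F2] Q') (c : P' →ₗ[F2] Q') :
    bold a b c ∘ₗ crMap Dg Dfg Dgh Dfgh
      = crMap (a ∘ₗ Dg) (a ∘ₗ Dfg) (b ∘ₗ Dgh + c ∘ₗ Dg) (b ∘ₗ Dfgh + c ∘ₗ Dfg) := by
  ext <;> simp [crMap, bold]

theorem crMap_add (A A' : Q →ₗ[F2] P') (B B' : P →ₗ[F2] P') (C C' : Q →ₗ[F2] Q')
    (D D' : P →ₗ[F2] Q') :
    crMap A B C D + crMap A' B' C' D' = crMap (A + A') (B + B') (C + C') (D + D') := by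
  ext <;> simp [crMap]

theorem crMap_eq_zero_iff {A : Q →ₗ[F2] P'} {B : P →ₗ[F2] P'} {C : Q →ₗ[F2] Q'}
    {D : P →ₗ[F2] Q'} : crMap A B C D = 0 ↔ A = 0 ∧ B = 0 ∧ C = 0 ∧ D = 0 := by
  constructor
  · intro h
    have h0 (x : P) (y : Q) := LinearMap.congr_fun h (x, y)
    simp only [crMap, LinearMap.prod_apply, LinearMap.zero_apply, Prod.ext_iff, Prod.fst_zero,
      Prod.snd_zero] at h0
    refine ⟨?_, ?_, ?_, ?_⟩ <;> ext z
    · simpa using (h0 0 z).1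
    · simpa using (h0 z 0).1
    · simpa using (h0 0 z).2
    · simpa using (h0 z 0).2
  · rintro ⟨rfl, rfl, rfl, rfl⟩
    ext <;> simp [crMap]

theorem crMap_comp_bold_add_bold_comp_crMap_eq_zero_iff {Dg : Q →ₗ[F2] P'} {Dfg : P →ₗ[F2] P'}
    {Dgh : Q →ₗ[F2] Q'} {Dfgh : P →ₗ[F2] Q'} {a : P →ₗ[F2] P} {b : Q →ₗ[F2] Q}
    {c : P →ₗ[F2] Q} {a' : P' →ₗ[F2] P'} {b' : Q' →ₗ[F2] Q'} {c' : P' →ₗ[F2] Q'} :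
    crMap Dg Dfg Dgh Dfgh ∘ₗ bold a b c + bold a' b' c' ∘ₗ crMap Dg Dfg Dgh Dfgh = 0 ↔
      (∀ y, a' (Dg y) = Dg (b y)) ∧
      (∀ x, a' (Dfg x) = Dg (c x) + Dfg (a x)) ∧
      (∀ y, b' (Dgh y) = Dgh (b y) + c' (Dg y)) ∧
      (∀ x, b' (Dfgh x) = Dgh (c x) + Dfgh (a x) + c' (Dfg x)) := by
  rw [crMap_comp_bold, bold_comp_crMap, crMap_add, crMap_eq_zero_iff, add_comm (Dg ∘ₗ b),
    add_comm (Dg ∘ₗ c + Dfg ∘ₗ a), add_left_comm (Dgh ∘ₗ b), add_left_comm (Dgh ∘ₗ c + Dfgh ∘ₗ a)]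
  simp only [F2.add_eq_zero_iff_eq, LinearMap.ext_iff, LinearMap.comp_apply, LinearMap.add_apply]

end Cone

theorem stmt13_general
    {M0 M1 M2 : Type}
    [AddCommGroup M0] [Module F2 M0] [AddCommGroup M1] [Module F2 M1]
    [AddCommGroup M2] [Module F2 M2]
    (d0 : M0 →ₗ[F2] M0) (d1 : M1 →ₗ[F2] M1) (d2 : M2 →ₗ[F2] M2)
    -- the typewriter M = (M₀, M₁; D_f, D_h; D_CR)
    (Df Dh : M0 →ₗ[F2] M1)
    (hDf : d1 ∘ₗ Df + Df ∘ₗ d0 = 0) (hDh : d1 ∘ₗ Dh + Dh ∘ₗ d0 = 0)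
    (Dg : M1 →ₗ[F2] M0) (Dfg : M0 →ₗ[F2] M0) (Dgh : M1 →ₗ[F2] M1) (Dfgh : M0 →ₗ[F2] M1)
    (hCR : crMap Dg Dfg Dgh Dfgh ∘ₗ bold d0 d1 Df
        + bold d0 d1 Dh ∘ₗ crMap Dg Dfg Dgh Dfgh = 0)
    -- the typewriter M' = (M₁, M₂; D'_f, D'_h; D'_CR)
    (Df' Dh' : M1 →ₗ[F2] M2)
    (hDf' : d2 ∘ₗ Df' + Df' ∘ₗ d1 = 0) (hDh' : d2 ∘ₗ Dh' + Dh' ∘ₗ d1 = 0)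
    (Dg' : M2 →ₗ[F2] M1) (Dfg' : M1 →ₗ[F2] M1) (Dgh' : M2 →ₗ[F2] M2)
    (Dfgh' : M1 →ₗ[F2] M2)
    (hCR' : crMap Dg' Dfg' Dgh' Dfgh' ∘ₗ bold d1 d2 Df'
        + bold d1 d2 Dh' ∘ₗ crMap Dg' Dfg' Dgh' Dfgh' = 0) :
    -- M ⋆ M' is a typewriter:
    (d2 ∘ₗ (Df' ∘ₗ Df) + (Df' ∘ₗ Df) ∘ₗ d0 = 0) ∧
    (d2 ∘ₗ (Dh' ∘ₗ Dh) + (Dh' ∘ₗ Dh) ∘ₗ d0 = 0) ∧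
    (crMap (Dg ∘ₗ Dg') (Dg ∘ₗ Dfg' ∘ₗ Df) (Dh' ∘ₗ Dgh ∘ₗ Dg')
          (Dh' ∘ₗ Dgh ∘ₗ Dfg' ∘ₗ Df)
        ∘ₗ bold d0 d2 (Df' ∘ₗ Df)
      + bold d0 d2 (Dh' ∘ₗ Dh)
        ∘ₗ crMap (Dg ∘ₗ Dg') (Dg ∘ₗ Dfg' ∘ₗ Df) (Dh' ∘ₗ Dgh ∘ₗ Dg')
            (Dh' ∘ₗ Dgh ∘ₗ Dfg' ∘ₗ Df) = 0) := by
  rw [comp_add_comp_eq_zero_iff] at hDf hDh hDf' hDh'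
  obtain ⟨hg, -, hgh, -⟩ := crMap_comp_bold_add_bold_comp_crMap_eq_zero_iff.1 hCR
  obtain ⟨hg', hfg', -, -⟩ := crMap_comp_bold_add_bold_comp_crMap_eq_zero_iff.1 hCR'
  refine ⟨comp_add_comp_eq_zero_iff.2 fun x => ?_, comp_add_comp_eq_zero_iff.2 fun x => ?_,
    crMap_comp_bold_add_bold_comp_crMap_eq_zero_iff.2 ⟨fun y => ?_, fun x => ?_, fun y => ?_,
      fun x => ?_⟩⟩ <;>
  simp only [LinearMap.comp_apply, map_add, hDf, hDh, hDf', hDh', hg, hgh, hg', hfg']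

theorem stmt13
    {M0 M1 M2 : Type}
    [AddCommGroup M0] [Module F2 M0] [AddCommGroup M1] [Module F2 M1]
    [AddCommGroup M2] [Module F2 M2]
    (d0 : M0 →ₗ[F2] M0) (d1 : M1 →ₗ[F2] M1) (d2 : M2 →ₗ[F2] M2)
    (hd0 : d0 ∘ₗ d0 = 0) (hd1 : d1 ∘ₗ d1 = 0) (hd2 : d2 ∘ₗ d2 = 0)
    -- the typewriter M = (M₀, M₁; D_f, D_h; D_CR)
    (Df Dh : M0 →ₗ[F2] M1)
    (hDf : d1 ∘ₗ Df + Df ∘ₗ d0 = 0) (hDh : d1 ∘ₗ Dh + Dh ∘ₗ d0 = 0)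
    (Dg : M1 →ₗ[F2] M0) (Dfg : M0 →ₗ[F2] M0) (Dgh : M1 →ₗ[F2] M1) (Dfgh : M0 →ₗ[F2] M1)
    (hCR : crMap Dg Dfg Dgh Dfgh ∘ₗ bold d0 d1 Df
        + bold d0 d1 Dh ∘ₗ crMap Dg Dfg Dgh Dfgh = 0)
    -- the typewriter M' = (M₁, M₂; D'_f, D'_h; D'_CR)
    (Df' Dh' : M1 →ₗ[F2] M2)
    (hDf' : d2 ∘ₗ Df' + Df' ∘ₗ d1 = 0) (hDh' : d2 ∘ₗ Dh' + Dh' ∘ₗ d1 = 0)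
    (Dg' : M2 →ₗ[F2] M1) (Dfg' : M1 →ₗ[F2] M1) (Dgh' : M2 →ₗ[F2] M2)
    (Dfgh' : M1 →ₗ[F2] M2)
    (hCR' : crMap Dg' Dfg' Dgh' Dfgh' ∘ₗ bold d1 d2 Df'
        + bold d1 d2 Dh' ∘ₗ crMap Dg' Dfg' Dgh' Dfgh' = 0) :
    -- M ⋆ M' is a typewriter:
    (d2 ∘ₗ (Df' ∘ₗ Df) + (Df' ∘ₗ Df) ∘ₗ d0 = 0) ∧
    (d2 ∘ₗ (Dh' ∘ₗ Dh) + (Dh' ∘ₗ Dh) ∘ₗ d0 = 0) ∧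
    (crMap (Dg ∘ₗ Dg') (Dg ∘ₗ Dfg' ∘ₗ Df) (Dh' ∘ₗ Dgh ∘ₗ Dg')
          (Dh' ∘ₗ Dgh ∘ₗ Dfg' ∘ₗ Df)
        ∘ₗ bold d0 d2 (Df' ∘ₗ Df)
      + bold d0 d2 (Dh' ∘ₗ Dh)
        ∘ₗ crMap (Dg ∘ₗ Dg') (Dg ∘ₗ Dfg' ∘ₗ Df) (Dh' ∘ₗ Dgh ∘ₗ Dg')
            (Dh' ∘ₗ Dgh ∘ₗ Dfg' ∘ₗ Df) = 0) :=
  stmt13_general d0 d1 d2 Df Dh hDf hDh Dg Dfg Dgh Dfgh hCR Df' Dh' hDf' hDh' Dg' Dfg' Dgh' Dfgh'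
    hCR'
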